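/- arXiv:1301.1157 — 6 statements merged into one kernel-verified Lean document; each statement's English description precedes it below -/
import Mathlib

section
/- Let P be a modular partition of a graph G. For every module M of G, the set {X ∈ P : M ∩ X ≠ ∅} is a module of the quotient graph G/P. -/
/-- `M` is a module of `G`: every vertex outside `M` is adjacent to all of `M` or to none. -/
def SimpleGraph.IsModule {V : Type*} (G : SimpleGraph V) (M : Set V) : Prop :=
  ∀ v ∉ M, (∀ m ∈ M, G.Adj v m) ∨ (∀ m ∈ M, ¬ G.Adj v m)

/-- `G` is prime: at least 4 vertices and all modules are trivial. -/
def SimpleGraph.IsPrimeGraph {V : Type*} [Fintype V] (G : SimpleGraph V) : Prop :=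
  4 ≤ Fintype.card V ∧
    ∀ M : Set V, G.IsModule M → M = ∅ ∨ (∃ v, M = {v}) ∨ M = Set.univ

/-- `H` on `V ⊕ W` is an extension of `G` on `V`: it induces `G` on the `inl` copy of `V`. -/
def SimpleGraph.IsExtension {V W : Type*} (G : SimpleGraph V) (H : SimpleGraph (V ⊕ W)) : Prop :=
  ∀ u v : V, H.Adj (Sum.inl u) (Sum.inl v) ↔ G.Adj u v

/-- The prime bound of `G`: the least `p` such that `G` has a prime `p`-extension. -/
noncomputable def SimpleGraph.primeBound {V : Type*} [Fintype V] (G : SimpleGraph V) : ℕ :=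
  sInf {p : ℕ | ∃ H : SimpleGraph (V ⊕ Fin p), G.IsExtension H ∧ H.IsPrimeGraph}

/-- The modular clique number: largest size of a module of `G` that is a clique. -/
noncomputable def SimpleGraph.modularCliqueNumber {V : Type*} [Fintype V]
    (G : SimpleGraph V) : ℕ :=
  sSup {n : ℕ | ∃ M : Set V, G.IsModule M ∧ G.IsClique M ∧ M.ncard = n}

/-- The modular stability number: `ω_M` of the complement. -/
noncomputable def SimpleGraph.modularStabilityNumber {V : Type*} [Fintype V]
    (G : SimpleGraph V) : ℕ :=
  Gᶜ.modularCliqueNumber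

/-- The number of isolated vertices of `G`. -/
noncomputable def SimpleGraph.isolatedCount {V : Type*} [Fintype V] (G : SimpleGraph V) : ℕ :=
  {v : V | ∀ w, ¬ G.Adj v w}.ncard

/-- `P` is a modular partition of `G`. -/
def SimpleGraph.IsModularPartition {V : Type*} (G : SimpleGraph V) (P : Set (Set V)) : Prop :=
  (∀ X ∈ P, X.Nonempty) ∧ ⋃₀ P = Set.univ ∧ P.Pairwise Disjoint ∧ ∀ X ∈ P, G.IsModule X

/-- The quotient graph `G/P` of a (modular) partition `P`. -/
def SimpleGraph.quotientGraph {V : Type*} (G : SimpleGraph V) (P : Set (Set V)) :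
    SimpleGraph P where
  Adj X Y := (X : Set V) ≠ (Y : Set V) ∧ ∃ u ∈ (X : Set V), ∃ v ∈ (Y : Set V), G.Adj u v
  symm := by
    constructor
    rintro X Y ⟨hne, u, hu, v, hv, h⟩
    exact ⟨fun h' => hne h'.symm, v, hv, u, hu, h.symm⟩
  loopless := by
    constructor
    rintro X ⟨hne, -⟩
    exact hne rfl

/-- `M` is a strong module of `G`. -/
def SimpleGraph.IsStrongModule {V : Type*} (G : SimpleGraph V) (M : Set V) : Prop :=
  G.IsModule M ∧ ∀ N : Set V, G.IsModule N → (M ∩ N).Nonempty → M ⊆ N ∨ N ⊆ M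

/-! Two disjoint modules are either completely joined or completely non-adjacent. A part `Y`
missing the module `M` is disjoint from it, so whether `Y` sees `M` decides, part by part, that
`Y` sees every part meeting `M` or none of them. -/

namespace SimpleGraph

variable {V : Type*} {G : SimpleGraph V}

theorem IsModule.adj_of_adj_of_disjoint {X Y : Set V} (hX : G.IsModule X) (hY : G.IsModule Y)
    (hXY : Disjoint X Y) {x x' y y' : V} (hx : x ∈ X) (hx' : x' ∈ X) (hy : y ∈ Y) (hy' : y' ∈ Y)
    (h : G.Adj x y) : G.Adj x' y' := by
  have hyx' : G.Adj y x' :=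
    (hX y (Set.disjoint_right.mp hXY hy)).resolve_right (fun hn => hn x hx h.symm) x' hx'
  exact (hY x' (Set.disjoint_left.mp hXY hx')).resolve_right (fun hn => hn y hy hyx'.symm) y' hy'

end SimpleGraph

/-- for a module `M` of `G`, the parts meeting `M` form a module of `G/P`. -/
theorem parts_meeting_module_is_quotient_module {V : Type*} (G : SimpleGraph V)
    (P : Set (Set V)) (hP : G.IsModularPartition P) (M : Set V) (hM : G.IsModule M) :
    (G.quotientGraph P).IsModule {X : P | ((X : Set V) ∩ M).Nonempty} := by
  obtain ⟨-, -, hdis, hmod⟩ := hP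
  intro Y hY
  have hYM : Disjoint (Y : Set V) M :=
    Set.disjoint_iff_inter_eq_empty.mpr (Set.not_nonempty_iff_eq_empty.mp hY)
  by_cases hYsees : ∃ y ∈ (Y : Set V), ∃ m ∈ M, G.Adj y m
  · obtain ⟨y, hy, m, hm, hym⟩ := hYsees
    left
    rintro X ⟨m', hm'X, hm'M⟩
    refine ⟨fun hXY => Set.disjoint_right.mp hYM hm'M (hXY ▸ hm'X), y, hy, m', hm'X, ?_⟩
    exact (hmod Y Y.2).adj_of_adj_of_disjoint hM hYM hy hy hm hm'M hym
  · right
    rintro X ⟨m, hmX, hmM⟩ ⟨hYX, u, hu, v, hv, huv⟩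
    exact hYsees ⟨u, hu, m, hmM,
      (hmod Y Y.2).adj_of_adj_of_disjoint (hmod X X.2) (hdis Y.2 X.2 hYX) hu hu hv hmX huv⟩
end

section
/- Let S and S' be disjoint finite sets with |S| ≥ 2 and |S'| = ⌈log₂(|S|+1)⌉. Then there exists a prime graph G on vertex set S ∪ S' such that both S and S' are stable (independent) sets in G. -/
/-- A stable (independent) set: a clique of the complement. -/
def SimpleGraph.IsStableSet {V : Type*} (G : SimpleGraph V) (S : Set V) : Prop :=
  Gᶜ.IsClique S

/-!
Pick `z ∈ S'` and give the vertices of `S` distinct nonempty subsets of `S'` as codes, using every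
pair `{z, v}` with `v ∈ S'`; this is possible because `|S'| ≤ |S| < 2 ^ |S'|`. Joining each vertex
of `S` to the vertices of its code gives a connected bipartite graph in which no two vertices have
the same neighbourhood. Such a graph is prime: a module inside one side is at most a singleton,
since a vertex distinguishing two of its elements lies outside it, and a module meeting both sides
is closed under taking neighbours.
-/

namespace SimpleGraph

variable {V : Type*} {G : SimpleGraph V} {S S' M : Set V}

lemma IsStableSet.not_adj (hS : G.IsStableSet S) {u v : V} (hu : u ∈ S) (hv : v ∈ S) :
    ¬ G.Adj u v := fun h => ((compl_adj G u v).1 (hS hu hv h.ne)).2 h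

/-- Two vertices of `M` with different neighbourhoods are told apart by some vertex, which lies
outside `M` because it is adjacent to one of them. -/
lemma IsModule.subsingleton_of_subset_isStableSet (hinj : Function.Injective G.neighborSet)
    (hS : G.IsStableSet S) (hM : G.IsModule M) (hMS : M ⊆ S) : M.Subsingleton := by
  intro x hx y hy
  by_contra hxy
  obtain ⟨w, hw⟩ : ∃ w, ¬ (G.Adj x w ↔ G.Adj y w) := by
    by_contra! h
    exact hxy (hinj (Set.ext h))
  have hwM : w ∉ M := fun hwM => by
    by_cases hxw : G.Adj x w
    · exact hS.not_adj (hMS hx) (hMS hwM) hxw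
    · exact hS.not_adj (hMS hy) (hMS hwM) ((not_iff.1 hw).1 hxw)
  rcases hM w hwM with hall | hnone
  · exact hw ⟨fun _ => (hall y hy).symm, fun _ => (hall x hx).symm⟩
  · exact hw ⟨fun h => (hnone x hx h.symm).elim, fun h => (hnone y hy h.symm).elim⟩

/-- A vertex outside `M` adjacent to all of `M` would be adjacent to a vertex of its own side. -/
lemma IsModule.mem_of_adj (hS : G.IsStableSet S) (hS' : G.IsStableSet S')
    (hcover : S ∪ S' = Set.univ) (hM : G.IsModule M) (hMS : (M ∩ S).Nonempty)
    (hMS' : (M ∩ S').Nonempty) {u v : V} (hu : u ∈ M) (huv : G.Adj u v) : v ∈ M := by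
  by_contra hv
  obtain ⟨s, hsM, hsS⟩ := hMS
  obtain ⟨s', hs'M, hs'S'⟩ := hMS'
  rcases hM v hv with hall | hnone
  · rcases hcover.symm ▸ Set.mem_univ v with hvS | hvS'
    · exact hS.not_adj hvS hsS (hall s hsM)
    · exact hS'.not_adj hvS' hs'S' (hall s' hs'M)
  · exact hnone u hu huv.symm

lemma IsModule.eq_univ_of_preconnected (hconn : G.Preconnected) (hS : G.IsStableSet S)
    (hS' : G.IsStableSet S') (hcover : S ∪ S' = Set.univ) (hM : G.IsModule M)
    (hMS : (M ∩ S).Nonempty) (hMS' : (M ∩ S').Nonempty) : M = Set.univ := by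
  have closed {u v : V} : u ∈ M → G.Adj u v → v ∈ M := hM.mem_of_adj hS hS' hcover hMS hMS'
  obtain ⟨u, huM, -⟩ := hMS
  refine Set.eq_univ_of_forall fun v => ?_
  induction (reachable_iff_reflTransGen u v).1 (hconn u v) with
  | refl => exact huM
  | tail _ hadj ih => exact closed ih hadj

theorem isPrimeGraph_of_preconnected [Fintype V] (hcard : 4 ≤ Fintype.card V)
    (hS : G.IsStableSet S) (hS' : G.IsStableSet S') (hcover : S ∪ S' = Set.univ)
    (hconn : G.Preconnected) (hinj : Function.Injective G.neighborSet) : G.IsPrimeGraph := by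
  refine ⟨hcard, fun M hM => ?_⟩
  by_cases hMS : M ⊆ S
  · exact (hM.subsingleton_of_subset_isStableSet hinj hS hMS).eq_empty_or_singleton.imp_right
      Or.inl
  by_cases hMS' : M ⊆ S'
  · exact (hM.subsingleton_of_subset_isStableSet hinj hS' hMS').eq_empty_or_singleton.imp_right
      Or.inl
  have side : ∀ {T T' : Set V}, T ∪ T' = Set.univ → ¬ M ⊆ T' → (M ∩ T).Nonempty := by
    intro T T' hTT' hMT'
    obtain ⟨v, hvM, hvT'⟩ := Set.not_subset.1 hMT'
    exact ⟨v, hvM, (hTT'.symm ▸ Set.mem_univ v).resolve_right hvT'⟩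
  exact Or.inr <| Or.inr <| hM.eq_univ_of_preconnected hconn hS hS' hcover
    (side hcover hMS') (side (Set.union_comm S S' ▸ hcover) hMS)

def codeGraph (c : S → Set V) : SimpleGraph V :=
  fromRel fun u v => ∃ s : S, ↑s = u ∧ v ∈ c s

section codeGraph

variable {c : S → Set V}

lemma codeGraph_adj_coe (hdisj : Disjoint S S') (hsub : ∀ s, c s ⊆ S') (s : S) (v : V) :
    (codeGraph c).Adj s v ↔ v ∈ c s := by
  refine ⟨fun h => ?_, fun hv => ?_⟩
  · obtain ⟨-, ⟨s', hs', hv⟩ | ⟨s', rfl, hs⟩⟩ := (fromRel_adj _ _ _).1 h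
    · exact Subtype.val_injective hs' ▸ hv
    · exact (Set.disjoint_left.1 hdisj s.2 (hsub s' hs)).elim
  · exact (fromRel_adj _ _ _).2
      ⟨fun h => Set.disjoint_left.1 hdisj s.2 (h ▸ hsub s hv), Or.inl ⟨s, rfl, hv⟩⟩

lemma codeGraph_adj_of_mem_right (hdisj : Disjoint S S') {u : V} (hu : u ∈ S') (v : V) :
    (codeGraph c).Adj u v ↔ ∃ s : S, ↑s = v ∧ u ∈ c s := by
  rw [codeGraph, fromRel_adj]
  refine ⟨fun ⟨_, h⟩ => h.resolve_left ?_, fun ⟨s, hs, hu'⟩ => ⟨?_, Or.inr ⟨s, hs, hu'⟩⟩⟩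
  · rintro ⟨s, rfl, -⟩
    exact Set.disjoint_left.1 hdisj s.2 hu
  · rintro rfl
    exact Set.disjoint_left.1 hdisj (hs ▸ s.2) hu

lemma codeGraph_isStableSet_left (hdisj : Disjoint S S') (hsub : ∀ s, c s ⊆ S') :
    (codeGraph c).IsStableSet S := fun u hu v hv huv =>
  (compl_adj _ _ _).2 ⟨huv, fun h => Set.disjoint_left.1 hdisj hv
    (hsub _ ((codeGraph_adj_coe hdisj hsub ⟨u, hu⟩ v).1 h))⟩

lemma codeGraph_isStableSet_right (hdisj : Disjoint S S') :
    (codeGraph c).IsStableSet S' := fun u hu v hv huv =>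
  (compl_adj _ _ _).2 ⟨huv, fun h => by
    obtain ⟨s, rfl, -⟩ := (codeGraph_adj_of_mem_right hdisj hu v).1 h
    exact Set.disjoint_left.1 hdisj s.2 hv⟩

/-- Every vertex of `S'` is joined to `z` through the vertex coded by `{z, v}`. -/
lemma codeGraph_preconnected (hdisj : Disjoint S S') (hsub : ∀ s, c s ⊆ S')
    (hcover : S ∪ S' = Set.univ) (hne : ∀ s, (c s).Nonempty) {z : V}
    (hpair : ∀ v ∈ S', ∃ s, c s = {z, v}) : (codeGraph c).Preconnected := by
  have adj := codeGraph_adj_coe hdisj hsub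
  have reach_right : ∀ v ∈ S', (codeGraph c).Reachable z v := fun v hv => by
    obtain ⟨s, hs⟩ := hpair v hv
    exact ((adj s z).2 (by simp [hs])).reachable.symm.trans ((adj s v).2 (by simp [hs])).reachable
  have reach : ∀ v, (codeGraph c).Reachable z v := fun v => by
    rcases hcover.symm ▸ Set.mem_univ v with hv | hv
    · obtain ⟨w, hw⟩ := hne ⟨v, hv⟩
      exact (reach_right w (hsub _ hw)).trans ((adj ⟨v, hv⟩ w).2 hw).reachable.symm
    · exact reach_right v hv
  exact fun u v => (reach u).symm.trans (reach v)

lemma codeGraph_neighborSet_injective (hdisj : Disjoint S S') (hsub : ∀ s, c s ⊆ S')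
    (hcover : S ∪ S' = Set.univ) (hinj : Function.Injective c) (hne : ∀ s, (c s).Nonempty)
    {z : V} (hpair : ∀ v ∈ S', ∃ s, c s = {z, v}) :
    Function.Injective (codeGraph c).neighborSet := by
  have adj := codeGraph_adj_coe hdisj hsub
  have mixed : ∀ u v, u ∈ S → v ∈ S' →
      (codeGraph c).neighborSet u ≠ (codeGraph c).neighborSet v := fun u v hu hv h => by
    obtain ⟨w, hw⟩ := hne ⟨u, hu⟩
    have hvw : (codeGraph c).Adj v w := by
      rw [← mem_neighborSet, ← h]
      exact (adj ⟨u, hu⟩ w).2 hw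
    exact (codeGraph_isStableSet_right hdisj).not_adj hv (hsub _ hw) hvw
  have right : ∀ u v, u ∈ S' → v ∈ S' → v ≠ z → u ≠ v →
      (codeGraph c).neighborSet u ≠ (codeGraph c).neighborSet v := fun u v hu hv hvz huv h => by
    obtain ⟨s, hs⟩ := hpair u hu
    have hvs : (codeGraph c).Adj v s := by
      rw [← mem_neighborSet, ← h]
      exact (codeGraph_adj_of_mem_right hdisj hu s).2 ⟨s, rfl, by simp [hs]⟩
    obtain ⟨s', hs', hv⟩ := (codeGraph_adj_of_mem_right hdisj hv s).1 hvs
    rw [Subtype.val_injective hs', hs] at hv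
    rcases hv with hv | hv
    exacts [hvz hv, huv hv.symm]
  intro u v h
  rcases hcover.symm ▸ Set.mem_univ u with hu | hu <;>
    rcases hcover.symm ▸ Set.mem_univ v with hv | hv
  · refine congrArg Subtype.val (@hinj ⟨u, hu⟩ ⟨v, hv⟩ ?_)
    ext w
    rw [← adj, ← adj]
    exact Set.ext_iff.1 h w
  · exact (mixed u v hu hv h).elim
  · exact (mixed v u hv hu h.symm).elim
  · by_contra huv
    by_cases hvz : v = z
    · exact right v u hv hu (hvz ▸ huv) (Ne.symm huv) h.symm
    · exact right u v hu hv hvz huv h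

end codeGraph

end SimpleGraph

/-- There are at most `|S'| ≤ |S|` pairs `{z, v}`, and `2 ^ |S'| - 1 ≥ |S|` nonempty subsets
of `S'`. -/
lemma exists_injective_code {V : Type*} [Finite V] {S S' : Set V} {z : V} (hz : z ∈ S')
    (hle : S'.ncard ≤ S.ncard) (hlt : S.ncard < 2 ^ S'.ncard) :
    ∃ c : S → Set V, Function.Injective c ∧ (∀ s, (c s).Nonempty) ∧ (∀ s, c s ⊆ S') ∧
      ∀ v ∈ S', ∃ s, c s = {z, v} := by
  set pairs := (fun v => ({z, v} : Set V)) '' S'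
  have hpairs : pairs ⊆ 𝒫 S' \ {∅} := by
    rintro _ ⟨v, hv, rfl⟩
    exact ⟨Set.insert_subset hz (Set.singleton_subset_iff.2 hv),
      (Set.insert_nonempty z {v}).ne_empty⟩
  have hcard : (𝒫 S' \ {∅}).ncard = 2 ^ S'.ncard - 1 := by
    rw [Set.ncard_sdiff_singleton_of_mem (Set.empty_subset S'), Set.ncard_powerset]
  obtain ⟨U, hpU, hU, hUcard⟩ := Set.exists_subsuperset_card_eq hpairs
    ((Set.ncard_image_le).trans hle) (n := S.ncard) (by omega)
  obtain ⟨e⟩ : Nonempty (S ≃ U) := Finite.card_eq.1 (by simp [hUcard])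
  refine ⟨fun s => e s, Subtype.val_injective.comp e.injective, fun s => ?_, fun s => ?_,
    fun v hv => ⟨e.symm ⟨{z, v}, hpU ⟨v, hv, rfl⟩⟩, by simp⟩⟩
  · exact Set.nonempty_iff_ne_empty.2 (hU (e s).2).2
  · exact (hU (e s).2).1

theorem exists_prime_graph_of_ncard_lt_two_pow {V : Type*} [Fintype V] {S S' : Set V}
    (hdisj : Disjoint S S') (hcover : S ∪ S' = Set.univ) (hS' : 2 ≤ S'.ncard)
    (hle : S'.ncard ≤ S.ncard) (hlt : S.ncard < 2 ^ S'.ncard) :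
    ∃ G : SimpleGraph V, G.IsPrimeGraph ∧ G.IsStableSet S ∧ G.IsStableSet S' := by
  obtain ⟨z, hz⟩ := Set.nonempty_of_ncard_ne_zero (s := S') (by omega)
  obtain ⟨c, hinj, hne, hsub, hpair⟩ := exists_injective_code hz hle hlt
  have hcard : Fintype.card V = S.ncard + S'.ncard := by
    rw [← Set.ncard_union_eq hdisj, hcover, Set.ncard_univ, Nat.card_eq_fintype_card]
  have hstab := SimpleGraph.codeGraph_isStableSet_left hdisj hsub
  have hstab' := SimpleGraph.codeGraph_isStableSet_right (c := c) hdisj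
  refine ⟨SimpleGraph.codeGraph c, ?_, hstab, hstab'⟩
  exact SimpleGraph.isPrimeGraph_of_preconnected (by omega) hstab hstab' hcover
    (SimpleGraph.codeGraph_preconnected hdisj hsub hcover hne hpair)
    (SimpleGraph.codeGraph_neighborSet_injective hdisj hsub hcover hinj hne hpair)

/-- for disjoint sets `S`, `S'` with `|S| ≥ 2` and `|S'| = ⌈log₂(|S|+1)⌉`,
there is a prime graph on `S ∪ S'` in which both `S` and `S'` are stable sets. -/
theorem exists_prime_graph_two_stable_sets {V : Type*} [Fintype V] (S S' : Set V)
    (hdisj : Disjoint S S') (hcover : S ∪ S' = Set.univ)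
    (hS : 2 ≤ S.ncard) (hS' : S'.ncard = Nat.clog 2 (S.ncard + 1)) :
    ∃ G : SimpleGraph V, G.IsPrimeGraph ∧ G.IsStableSet S ∧ G.IsStableSet S' := by
  refine exists_prime_graph_of_ncard_lt_two_pow hdisj hcover ?_ ?_ ?_ <;> rw [hS']
  · exact (Nat.lt_clog_iff_pow_lt one_lt_two).2 (by omega)
  · exact Nat.clog_le_of_le_pow Nat.lt_two_pow_self
  · exact Nat.le_pow_clog one_lt_two _
end

section
/- Let C and S' be disjoint finite sets with |C| ≥ 2 and |S'| = ⌈log₂(|C|+1)⌉. Then there exists a prime graph G on vertex set C ∪ S' such that C is a clique in G and S' is a stable set in G. -/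
/-!
Let `k = |S'|` and `n = |C|`, so that `k ≤ n < 2 ^ k`. Label the vertices of `C` injectively by
proper subsets of `S'`, using every singleton as a label, and join `c ∈ C` to the vertices of its
label. A module `M` with two vertices then contains a vertex of `C` (the private neighbour of a
stable vertex separates it from any other stable vertex) and a vertex of `S'` (distinct labels are
separated by a stable vertex). Once `M` meets both sides, private neighbours force `S' ⊆ M`, and
since labels are proper subsets every vertex of `C` is separated by `M ⊇ S'`, so `M` is everything.
-/

open Set

namespace SimpleGraph

variable {V : Type*} {G : SimpleGraph V} {M C S : Set V}

theorem IsModule.mem_of_adj_of_not_adj (hM : G.IsModule M) {v m m' : V} (hm : m ∈ M)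
    (hm' : m' ∈ M) (hvm : G.Adj v m) (hvm' : ¬G.Adj v m') : v ∈ M := by
  by_contra hv
  rcases hM v hv with hall | hnone
  · exact hvm' (hall m' hm')
  · exact hnone m hm hvm

theorem IsModule.exists_mem_of_privateNeighbour (hM : G.IsModule M) (hcover : C ∪ S = univ)
    (hpriv : ∀ s ∈ S, ∃ c ∈ C, ∀ t ∈ S, G.Adj c t ↔ t = s) (hMnt : M.Nontrivial) :
    ∃ c ∈ C, c ∈ M := by
  obtain ⟨a, ha, b, hb, hab⟩ := hMnt
  by_cases haC : a ∈ C
  · exact ⟨a, haC, ha⟩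
  by_cases hbC : b ∈ C
  · exact ⟨b, hbC, hb⟩
  have haS : a ∈ S := (eq_univ_iff_forall.1 hcover a).resolve_left haC
  have hbS : b ∈ S := (eq_univ_iff_forall.1 hcover b).resolve_left hbC
  obtain ⟨c, hc, hcN⟩ := hpriv a haS
  exact ⟨c, hc, hM.mem_of_adj_of_not_adj ha hb ((hcN a haS).2 rfl)
    fun hcb => hab ((hcN b hbS).1 hcb).symm⟩

theorem IsModule.exists_mem_of_separating (hM : G.IsModule M) (hcover : C ∪ S = univ)
    (hsep : ∀ c ∈ C, ∀ c' ∈ C, c ≠ c' → ∃ s ∈ S, ¬(G.Adj c s ↔ G.Adj c' s))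
    (hMnt : M.Nontrivial) : ∃ s ∈ S, s ∈ M := by
  obtain ⟨a, ha, b, hb, hab⟩ := hMnt
  by_cases haS : a ∈ S
  · exact ⟨a, haS, ha⟩
  by_cases hbS : b ∈ S
  · exact ⟨b, hbS, hb⟩
  have haC : a ∈ C := (eq_univ_iff_forall.1 hcover a).resolve_right haS
  have hbC : b ∈ C := (eq_univ_iff_forall.1 hcover b).resolve_right hbS
  obtain ⟨s, hs, hsep⟩ := hsep a haC b hbC hab
  refine ⟨s, hs, ?_⟩
  by_cases has : G.Adj a s
  · have hbs : ¬G.Adj b s := fun hbs => hsep (iff_of_true has hbs)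
    exact hM.mem_of_adj_of_not_adj ha hb has.symm fun hsb => hbs hsb.symm
  · have hbs : G.Adj b s := by_contra fun hbs => hsep (iff_of_false has hbs)
    exact hM.mem_of_adj_of_not_adj hb ha hbs.symm fun hsa => has hsa.symm

theorem IsModule.subset_of_privateNeighbour (hM : G.IsModule M) (hC : G.IsClique C)
    (hS : G.IsStableSet S) (hpriv : ∀ s ∈ S, ∃ c ∈ C, ∀ t ∈ S, G.Adj c t ↔ t = s) {c s : V}
    (hc : c ∈ C) (hcM : c ∈ M) (hs : s ∈ S) (hsM : s ∈ M) : S ⊆ M := by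
  intro q hq
  obtain rfl | hqs := eq_or_ne q s
  · exact hsM
  obtain ⟨c', hc', hc'N⟩ := hpriv q hq
  have hc'M : c' ∈ M := by
    obtain rfl | hc'c := eq_or_ne c' c
    · exact hcM
    exact hM.mem_of_adj_of_not_adj hcM hsM (hC hc' hc hc'c) fun h => hqs ((hc'N s hs).1 h).symm
  exact hM.mem_of_adj_of_not_adj hc'M hsM ((hc'N q hq).2 rfl).symm (hS hq hs hqs).2

theorem IsModule.subset_of_exists_not_adj (hM : G.IsModule M) (hC : G.IsClique C)
    (hnonadj : ∀ c ∈ C, ∃ s ∈ S, ¬G.Adj c s) {c : V} (hc : c ∈ C) (hcM : c ∈ M)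
    (hSM : S ⊆ M) : C ⊆ M := by
  intro v hv
  obtain rfl | hvc := eq_or_ne v c
  · exact hcM
  obtain ⟨s, hs, hvs⟩ := hnonadj v hv
  exact hM.mem_of_adj_of_not_adj hcM (hSM hs) (hC hv hc hvc) hvs

theorem isPrimeGraph_of_isClique_of_isStableSet [Fintype V] (h4 : 4 ≤ Fintype.card V)
    (hcover : C ∪ S = univ) (hC : G.IsClique C) (hS : G.IsStableSet S)
    (hpriv : ∀ s ∈ S, ∃ c ∈ C, ∀ t ∈ S, G.Adj c t ↔ t = s)
    (hsep : ∀ c ∈ C, ∀ c' ∈ C, c ≠ c' → ∃ s ∈ S, ¬(G.Adj c s ↔ G.Adj c' s))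
    (hnonadj : ∀ c ∈ C, ∃ s ∈ S, ¬G.Adj c s) : G.IsPrimeGraph := by
  refine ⟨h4, fun M hM => ?_⟩
  rcases M.subsingleton_or_nontrivial with hMs | hMnt
  · exact hMs.eq_empty_or_singleton.imp_right Or.inl
  obtain ⟨c, hc, hcM⟩ := hM.exists_mem_of_privateNeighbour hcover hpriv hMnt
  obtain ⟨s, hs, hsM⟩ := hM.exists_mem_of_separating hcover hsep hMnt
  have hSM := hM.subset_of_privateNeighbour hC hS hpriv hc hcM hs hsM
  have hCM := hM.subset_of_exists_not_adj hC hnonadj hc hcM hSM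
  exact Or.inr (Or.inr (eq_univ_of_univ_subset (hcover ▸ union_subset hCM hSM)))

def labelGraph (C : Set V) (ℓ : V → Set V) : SimpleGraph V :=
  fromRel fun u v => u ∈ C ∧ (v ∈ C ∨ v ∈ ℓ u)

variable {ℓ : V → Set V}

theorem isClique_labelGraph : (labelGraph C ℓ).IsClique C :=
  fun _ hu _ hv huv => (fromRel_adj _ _ _).2 ⟨huv, Or.inl ⟨hu, Or.inl hv⟩⟩

theorem isStableSet_labelGraph (hdisj : Disjoint C S) : (labelGraph C ℓ).IsStableSet S := by
  intro u hu v hv huv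
  refine (compl_adj _ _ _).2 ⟨huv, fun hadj => ?_⟩
  rcases ((fromRel_adj _ _ _).1 hadj).2 with ⟨huC, -⟩ | ⟨hvC, -⟩
  · exact Set.disjoint_left.1 hdisj huC hu
  · exact Set.disjoint_left.1 hdisj hvC hv

theorem labelGraph_adj (hdisj : Disjoint C S) {c s : V} (hc : c ∈ C) (hs : s ∈ S) :
    (labelGraph C ℓ).Adj c s ↔ s ∈ ℓ c := by
  have hsC : s ∉ C := Set.disjoint_right.1 hdisj hs
  have hcs : c ≠ s := ne_of_mem_of_not_mem hc hsC
  simp [labelGraph, hc, hsC, hcs]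

theorem isPrimeGraph_labelGraph [Fintype V] (h4 : 4 ≤ Fintype.card V) (hdisj : Disjoint C S)
    (hcover : C ∪ S = univ) (hinj : InjOn ℓ C) (hsub : ∀ c ∈ C, ℓ c ⊂ S)
    (hsingle : ∀ s ∈ S, ∃ c ∈ C, ℓ c = {s}) : (labelGraph C ℓ).IsPrimeGraph := by
  refine isPrimeGraph_of_isClique_of_isStableSet h4 hcover isClique_labelGraph
    (isStableSet_labelGraph hdisj) (fun s hs => ?_) (fun c hc c' hc' hne => ?_) (fun c hc => ?_)
  · obtain ⟨c, hc, hcs⟩ := hsingle s hs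
    exact ⟨c, hc, fun t ht => by rw [labelGraph_adj hdisj hc ht, hcs, mem_singleton_iff]⟩
  · by_contra! hsame
    refine hne (hinj hc hc' (Set.ext fun s => ?_))
    by_cases hs : s ∈ S
    · rw [← labelGraph_adj hdisj hc hs, ← labelGraph_adj hdisj hc' hs]
      exact hsame s hs
    · exact iff_of_false (fun h => hs ((hsub c hc).1 h)) (fun h => hs ((hsub c' hc').1 h))
  · obtain ⟨s, hs, hsc⟩ := exists_of_ssubset (hsub c hc)
    exact ⟨s, hs, (labelGraph_adj hdisj hc hs).not.2 hsc⟩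

end SimpleGraph

theorem Set.exists_injOn_ssubset_labels {α β : Type*} {C : Set α} {S : Set β}
    (hS : 2 ≤ S.ncard) (hSC : S.ncard ≤ C.ncard) (hC : C.ncard < 2 ^ S.ncard) :
    ∃ ℓ : α → Set β, InjOn ℓ C ∧ (∀ c ∈ C, ℓ c ⊂ S) ∧ ∀ s ∈ S, ∃ c ∈ C, ℓ c = {s} := by
  classical
  lift S to Finset β using finite_of_ncard_pos (by omega)
  lift C to Finset α using finite_of_ncard_pos (by omega)
  rw [ncard_coe_finset, ncard_coe_finset] at *
  have hsingletons : S.map ⟨singleton, Finset.singleton_injective⟩ ⊆ Finset.Iio S := by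
    intro t ht
    obtain ⟨s, hs, rfl⟩ := Finset.mem_map.1 ht
    refine Finset.mem_Iio.2 ((Finset.singleton_subset_iff.2 hs).ssubset_of_ne ?_)
    rintro rfl
    simp at hS
  obtain ⟨L, hIL, hLS, hL⟩ := Finset.exists_subsuperset_card_eq hsingletons
    (n := C.card) (by simpa using hSC) (by rw [Finset.card_Iio_finset]; omega)
  obtain ⟨ℓ, hℓ⟩ := C.finite_toSet.exists_bijOn_of_encard_eq (t := (L : Set (Finset β)))
    (by simp [hL])
  refine ⟨fun a => ℓ a, Finset.coe_injective.comp_injOn hℓ.injOn,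
    fun c hc => Finset.coe_ssubset.2 (Finset.mem_Iio.1 (hLS (hℓ.mapsTo hc))), fun s hs => ?_⟩
  obtain ⟨c, hc, hcs⟩ := hℓ.surjOn (hIL (Finset.mem_map_of_mem _ hs))
  exact ⟨c, hc, by simp [hcs]⟩

/-- for disjoint sets `C`, `S'` with `|C| ≥ 2` and `|S'| = ⌈log₂(|C|+1)⌉`,
there is a prime graph on `C ∪ S'` with `C` a clique and `S'` a stable set. -/
theorem exists_prime_graph_clique_and_stable {V : Type*} [Fintype V] (C S' : Set V)
    (hdisj : Disjoint C S') (hcover : C ∪ S' = Set.univ)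
    (hC : 2 ≤ C.ncard) (hS' : S'.ncard = Nat.clog 2 (C.ncard + 1)) :
    ∃ G : SimpleGraph V, G.IsPrimeGraph ∧ G.IsClique C ∧ G.IsStableSet S' := by
  have hk : 2 ≤ S'.ncard := hS' ▸ (Nat.lt_clog_iff_pow_lt one_lt_two).2 (by omega)
  have hkn : S'.ncard ≤ C.ncard :=
    hS' ▸ (Nat.clog_le_iff_le_pow one_lt_two).2 Nat.lt_two_pow_self
  have hnk : C.ncard < 2 ^ S'.ncard := hS' ▸ Nat.le_pow_clog one_lt_two _
  obtain ⟨ℓ, hinj, hsub, hsingle⟩ := Set.exists_injOn_ssubset_labels hk hkn hnk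
  have hcard : Fintype.card V = C.ncard + S'.ncard := by
    rw [← Set.ncard_union_eq hdisj, hcover, Set.ncard_univ, Nat.card_eq_fintype_card]
  exact ⟨SimpleGraph.labelGraph C ℓ,
    SimpleGraph.isPrimeGraph_labelGraph (by omega) hdisj hcover hinj hsub hsingle,
    SimpleGraph.isClique_labelGraph, SimpleGraph.isStableSet_labelGraph hdisj⟩
end

section
/- Let G be a prime graph and a ∉ V(G). An extension H of G to V(G) ∪ {a} (i.e., H[V(G)] = G) fails to be prime if and only if the neighbourhood of a in H equals ∅, V(G), N_G(v), or N_G(v) ∪ {v} for some vertex v of G. Consequently, there exist exactly 2^{|V(G)|} − 2|V(G)| − 2 prime extensions of G to V(G) ∪ {a}. -/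
/-!
A module of a one-vertex extension `H` of `G` meets `V(G)` in a module of `G`. When `G` is prime
that trace is empty, a single vertex or all of `V(G)`, so a nontrivial module of `H` is either
`V(G)` itself (the new vertex `a` sees all of `V(G)` or none of it) or a pair `{v, a}` of twins
(`N(a)` is `N(v)` or `N(v) ∪ {v}`). In a prime graph these `2|V(G)| + 2` neighbourhoods are pairwise
distinct: two vertices are never twins and no vertex is isolated or universal.
-/

namespace SimpleGraph

variable {V : Type*} {G : SimpleGraph V}

theorem isModule_pair_iff {v w : V} :
    G.IsModule {v, w} ↔ ∀ z, z ≠ v → z ≠ w → (G.Adj z v ↔ G.Adj z w) := by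
  simp only [IsModule, Set.mem_insert_iff, Set.mem_singleton_iff, not_or, and_imp,
    forall_eq_or_imp, forall_eq]
  exact forall_congr' fun z => forall_congr' fun _ => forall_congr' fun _ => by tauto

theorem isModule_compl_singleton_iff {v : V} :
    G.IsModule {v}ᶜ ↔ (∀ w ≠ v, G.Adj v w) ∨ ∀ w ≠ v, ¬ G.Adj v w := by
  simp [IsModule]

theorem IsExtension.isModule_preimage_inl {W : Type*} {H : SimpleGraph (V ⊕ W)}
    (hH : G.IsExtension H) {M : Set (V ⊕ W)} (hM : H.IsModule M) :
    G.IsModule (Sum.inl ⁻¹' M) := by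
  intro v hv
  exact (hM (Sum.inl v) hv).imp (fun h m hm => (hH v m).mp (h _ hm))
    (fun h m hm => mt (hH v m).mpr (h _ hm))

theorem neighborSet_ne_neighborSet_union_singleton (v w : V) :
    G.neighborSet v ≠ G.neighborSet w ∪ {w} := by
  intro h
  have hvw : w ∈ G.neighborSet v := h ▸ Set.mem_union_right _ rfl
  have hvv : v ∈ G.neighborSet v := h ▸ Set.mem_union_left _ (G.adj_symm hvw)
  exact G.loopless.irrefl v hvv

section Prime

variable [Fintype V]

theorem isPrimeGraph_iff : G.IsPrimeGraph ↔
    4 ≤ Fintype.card V ∧ ∀ M, G.IsModule M → M.Nontrivial → M = Set.univ := by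
  refine and_congr_right fun _ => forall₂_congr fun M _ => ?_
  constructor
  · rintro (rfl | ⟨v, rfl⟩ | h) hM
    exacts [absurd hM Set.not_nontrivial_empty, absurd hM (Set.not_nontrivial_singleton), h]
  · intro h
    by_cases hM : M.Nontrivial
    · exact Or.inr (Or.inr (h hM))
    · exact (Set.not_nontrivial_iff.mp hM).eq_empty_or_singleton.imp_right Or.inl

theorem not_isPrimeGraph_of_isModule {M : Set V} (hM : G.IsModule M) (hnt : M.Nontrivial)
    (hne : M ≠ Set.univ) : ¬ G.IsPrimeGraph :=
  fun hG => hne (isPrimeGraph_iff.mp hG |>.2 M hM hnt)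

theorem IsPrimeGraph.not_isModule_pair (hG : G.IsPrimeGraph) {v w : V} (hvw : v ≠ w) :
    ¬ G.IsModule {v, w} := by
  refine fun hM => not_isPrimeGraph_of_isModule hM (Set.nontrivial_pair hvw) (fun h => ?_) hG
  have := hG.1
  rw [Set.eq_univ_iff_ncard, Set.ncard_pair hvw, Nat.card_eq_fintype_card] at h
  omega

theorem IsPrimeGraph.not_isModule_compl_singleton (hG : G.IsPrimeGraph) (v : V) :
    ¬ G.IsModule {v}ᶜ := by
  refine fun hM => not_isPrimeGraph_of_isModule hM ?_
    (fun h => (h ▸ Set.mem_univ v : v ∈ ({v}ᶜ : Set V)) rfl) hG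
  have := hG.1
  rw [← Set.one_lt_ncard_iff_nontrivial, Set.ncard_compl, Set.ncard_singleton,
    Nat.card_eq_fintype_card]
  omega

theorem IsPrimeGraph.neighborSet_nonempty (hG : G.IsPrimeGraph) (v : V) :
    (G.neighborSet v).Nonempty := by
  by_contra h
  refine hG.not_isModule_compl_singleton v (isModule_compl_singleton_iff.mpr (Or.inr ?_))
  exact fun w _ hvw => h ⟨w, hvw⟩

theorem IsPrimeGraph.neighborSet_union_singleton_ne_univ (hG : G.IsPrimeGraph) (v : V) :
    G.neighborSet v ∪ {v} ≠ Set.univ := by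
  intro h
  refine hG.not_isModule_compl_singleton v (isModule_compl_singleton_iff.mpr (Or.inl ?_))
  intro w hw
  simpa [hw, adj_comm] using Set.eq_univ_iff_forall.mp h w

theorem IsPrimeGraph.neighborSet_injective (hG : G.IsPrimeGraph) :
    Function.Injective G.neighborSet := by
  intro v w h
  by_contra hvw
  refine hG.not_isModule_pair hvw (isModule_pair_iff.mpr fun z _ _ => ?_)
  simpa [adj_comm] using Set.ext_iff.mp h z

theorem IsPrimeGraph.neighborSet_union_singleton_injective (hG : G.IsPrimeGraph) :
    Function.Injective fun v => G.neighborSet v ∪ {v} := by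
  intro v w h
  by_contra hvw
  refine hG.not_isModule_pair hvw (isModule_pair_iff.mpr fun z hzv hzw => ?_)
  simpa [adj_comm, hzv, hzw] using Set.ext_iff.mp h z

end Prime

def extendByVertex (G : SimpleGraph V) (S : Set V) : SimpleGraph (V ⊕ Unit) where
  Adj
    | Sum.inl u, Sum.inl v => G.Adj u v
    | Sum.inl u, Sum.inr _ => u ∈ S
    | Sum.inr _, Sum.inl v => v ∈ S
    | Sum.inr _, Sum.inr _ => False
  symm := by constructor; rintro (u | u) (v | v) h <;> first | exact h.symm | exact h
  loopless := by constructor; rintro (u | u) h <;> first | exact G.loopless.irrefl u h | exact h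

section ExtendByVertex

variable {S : Set V}

@[simp]
theorem extendByVertex_adj_inl_inl {u v : V} :
    (G.extendByVertex S).Adj (Sum.inl u) (Sum.inl v) ↔ G.Adj u v := Iff.rfl

@[simp]
theorem extendByVertex_adj_inl_inr {u : V} {a : Unit} :
    (G.extendByVertex S).Adj (Sum.inl u) (Sum.inr a) ↔ u ∈ S := Iff.rfl

@[simp]
theorem extendByVertex_adj_inr_inl {a : Unit} {v : V} :
    (G.extendByVertex S).Adj (Sum.inr a) (Sum.inl v) ↔ v ∈ S := Iff.rfl

theorem isExtension_extendByVertex (G : SimpleGraph V) (S : Set V) :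
    G.IsExtension (G.extendByVertex S) := fun _ _ => Iff.rfl

theorem IsExtension.eq_extendByVertex {H : SimpleGraph (V ⊕ Unit)} (hH : G.IsExtension H) :
    H = G.extendByVertex {v | H.Adj (Sum.inl v) (Sum.inr ())} := by
  ext (u | ⟨⟩) (v | ⟨⟩)
  · exact hH u v
  · rfl
  · exact H.adj_comm _ _
  · exact iff_of_false (H.loopless.irrefl _) id

theorem extendByVertex_injective : Function.Injective G.extendByVertex := by
  intro S T h
  ext v
  simpa using congrArg (fun H : SimpleGraph (V ⊕ Unit) => H.Adj (Sum.inl v) (Sum.inr ())) h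

theorem isModule_range_inl_extendByVertex_iff :
    (G.extendByVertex S).IsModule (Set.range Sum.inl) ↔ S = Set.univ ∨ S = ∅ := by
  simp [IsModule, Set.eq_univ_iff_forall, Set.eq_empty_iff_forall_notMem]

theorem isModule_pair_extendByVertex_iff {x : V} :
    (G.extendByVertex S).IsModule {Sum.inl x, Sum.inr ()} ↔
      S = G.neighborSet x ∨ S = G.neighborSet x ∪ {x} := by
  rw [isModule_pair_iff]
  constructor
  · intro h
    have hS : ∀ w ≠ x, w ∈ S ↔ G.Adj x w := fun w hw => by
      simpa [adj_comm] using (h (Sum.inl w) (by simpa using hw) Sum.inl_ne_inr).symm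
    by_cases hx : x ∈ S
    · refine Or.inr (Set.ext fun w => ?_)
      rcases eq_or_ne w x with rfl | hw
      · simpa using hx
      · simpa [hw] using hS w hw
    · refine Or.inl (Set.ext fun w => ?_)
      rcases eq_or_ne w x with rfl | hw
      · simpa using hx
      · exact hS w hw
  · rintro (rfl | rfl) (w | ⟨⟩) hwx h
    · simp [adj_comm]
    · exact absurd rfl h
    · have hw : w ≠ x := fun h => hwx (h ▸ rfl)
      simp [adj_comm, hw]
    · exact absurd rfl h

end ExtendByVertex

/-- The neighbourhoods of a new vertex `a` for which `V` or some twin pair `{v, a}` is a module. -/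
def degenerateNeighborSets (G : SimpleGraph V) : Set (Set V) :=
  insert ∅ (insert Set.univ
    (Set.range G.neighborSet ∪ Set.range fun v => G.neighborSet v ∪ {v}))

theorem mem_degenerateNeighborSets {S : Set V} : S ∈ G.degenerateNeighborSets ↔
    S = ∅ ∨ S = Set.univ ∨ (∃ v, S = G.neighborSet v) ∨ ∃ v, S = G.neighborSet v ∪ {v} := by
  simp only [degenerateNeighborSets, Set.mem_insert_iff, Set.mem_union, Set.mem_range,
    eq_comm (b := S)]

variable [Fintype V]

theorem IsExtension.eq_range_inl_or_eq_pair (hG : G.IsPrimeGraph)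
    {H : SimpleGraph (V ⊕ Unit)} (hH : G.IsExtension H) {M : Set (V ⊕ Unit)}
    (hM : H.IsModule M) (hnt : M.Nontrivial) (hne : M ≠ Set.univ) :
    M = Set.range Sum.inl ∨ ∃ x, M = {Sum.inl x, Sum.inr ()} := by
  have hM' := (isPrimeGraph_iff.mp hG).2 _ (hH.isModule_preimage_inl hM)
  by_cases hV : (Sum.inl ⁻¹' M).Nontrivial
  · have hinl : ∀ v, Sum.inl v ∈ M := Set.eq_univ_iff_forall.mp (hM' hV)
    have hinr : Sum.inr () ∉ M := fun h => hne (Set.eq_univ_of_forall fun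
      | Sum.inl v => hinl v
      | Sum.inr () => h)
    left
    ext (v | ⟨⟩)
    · simpa using hinl v
    · simpa using hinr
  · have hsub := Set.not_nontrivial_iff.mp hV
    right
    obtain ⟨x, hx, hinr⟩ : ∃ x, Sum.inl x ∈ M ∧ Sum.inr () ∈ M := by
      obtain ⟨a, ha, b, hb, hab⟩ := hnt
      rcases a with a | ⟨⟩ <;> rcases b with b | ⟨⟩
      · exact absurd (congrArg Sum.inl (hsub ha hb)) hab
      · exact ⟨a, ha, hb⟩
      · exact ⟨b, hb, ha⟩
      · exact absurd rfl hab
    refine ⟨x, Set.ext fun z => ?_⟩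
    rcases z with w | ⟨⟩
    · simpa using ⟨fun hw => hsub hw hx, fun h => h ▸ hx⟩
    · simpa using hinr

theorem not_isPrimeGraph_extendByVertex_of_mem [Nontrivial V] {S : Set V}
    (hS : S ∈ G.degenerateNeighborSets) : ¬ (G.extendByVertex S).IsPrimeGraph := by
  have hV : (Set.range (Sum.inl : V → V ⊕ Unit)).Nontrivial := by
    obtain ⟨a, b, hab⟩ := exists_pair_ne V
    exact ⟨_, ⟨a, rfl⟩, _, ⟨b, rfl⟩, Sum.inl_injective.ne hab⟩
  have hVne : Set.range (Sum.inl : V → V ⊕ Unit) ≠ Set.univ := fun h => by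
    simpa using Set.eq_univ_iff_forall.mp h (Sum.inr ())
  have hpair (x : V) : ({Sum.inl x, Sum.inr ()} : Set (V ⊕ Unit)) ≠ Set.univ := fun h => by
    obtain ⟨w, hw⟩ := exists_ne x
    simpa [hw] using Set.eq_univ_iff_forall.mp h (Sum.inl w)
  rcases mem_degenerateNeighborSets.mp hS with h | h | ⟨x, h⟩ | ⟨x, h⟩
  · exact not_isPrimeGraph_of_isModule
      (isModule_range_inl_extendByVertex_iff.mpr (Or.inr h)) hV hVne
  · exact not_isPrimeGraph_of_isModule
      (isModule_range_inl_extendByVertex_iff.mpr (Or.inl h)) hV hVne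
  · exact not_isPrimeGraph_of_isModule (isModule_pair_extendByVertex_iff.mpr (Or.inl h))
      (Set.nontrivial_pair Sum.inl_ne_inr) (hpair x)
  · exact not_isPrimeGraph_of_isModule (isModule_pair_extendByVertex_iff.mpr (Or.inr h))
      (Set.nontrivial_pair Sum.inl_ne_inr) (hpair x)

theorem IsPrimeGraph.mem_degenerateNeighborSets_of_not_isPrimeGraph_extendByVertex
    (hG : G.IsPrimeGraph) {S : Set V} (hS : ¬ (G.extendByVertex S).IsPrimeGraph) :
    S ∈ G.degenerateNeighborSets := by
  have hcard : 4 ≤ Fintype.card (V ⊕ Unit) := by have := hG.1; simp; omega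
  obtain ⟨M, hM, hnt, hne⟩ : ∃ M, (G.extendByVertex S).IsModule M ∧ M.Nontrivial ∧
      M ≠ Set.univ := by
    simpa only [isPrimeGraph_iff, hcard, true_and, not_forall, exists_prop] using hS
  rw [mem_degenerateNeighborSets]
  rcases (isExtension_extendByVertex G S).eq_range_inl_or_eq_pair hG hM hnt hne
    with rfl | ⟨x, rfl⟩
  · rw [isModule_range_inl_extendByVertex_iff] at hM
    tauto
  · rw [isModule_pair_extendByVertex_iff] at hM
    exact Or.inr (Or.inr (hM.imp (⟨x, ·⟩) (⟨x, ·⟩)))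

theorem IsPrimeGraph.not_isPrimeGraph_extendByVertex_iff (hG : G.IsPrimeGraph) {S : Set V} :
    ¬ (G.extendByVertex S).IsPrimeGraph ↔ S ∈ G.degenerateNeighborSets :=
  have : Nontrivial V := Fintype.one_lt_card_iff_nontrivial.mp (by have := hG.1; omega)
  ⟨hG.mem_degenerateNeighborSets_of_not_isPrimeGraph_extendByVertex,
    not_isPrimeGraph_extendByVertex_of_mem⟩

theorem IsPrimeGraph.ncard_degenerateNeighborSets (hG : G.IsPrimeGraph) :
    G.degenerateNeighborSets.ncard = 2 * Fintype.card V + 2 := by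
  have : Nonempty V := Fintype.card_pos_iff.mp (by have := hG.1; omega)
  have h0 : (∅ : Set V) ∉ insert Set.univ
      (Set.range G.neighborSet ∪ Set.range fun v => G.neighborSet v ∪ {v}) := by
    simp only [Set.mem_insert_iff, Set.mem_union, Set.mem_range, not_or, not_exists]
    exact ⟨Set.empty_ne_univ, fun v h => (hG.neighborSet_nonempty v).ne_empty h,
      fun v => ((Set.singleton_nonempty v).mono Set.subset_union_right).ne_empty⟩
  have h1 : Set.univ ∉
      Set.range G.neighborSet ∪ Set.range fun v => G.neighborSet v ∪ {v} := by
    simp only [Set.mem_union, Set.mem_range, not_or, not_exists]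
    exact ⟨fun v h => G.irrefl (Set.eq_univ_iff_forall.mp h v),
      hG.neighborSet_union_singleton_ne_univ⟩
  have hdisj : Disjoint (Set.range G.neighborSet)
      (Set.range fun v => G.neighborSet v ∪ {v}) := by
    rw [Set.disjoint_left]
    rintro _ ⟨v, rfl⟩ ⟨w, hw⟩
    exact neighborSet_ne_neighborSet_union_singleton v w hw.symm
  rw [degenerateNeighborSets, Set.ncard_insert_of_notMem h0, Set.ncard_insert_of_notMem h1,
    Set.ncard_union_eq hdisj, Set.ncard_range_of_injective hG.neighborSet_injective,
    Set.ncard_range_of_injective hG.neighborSet_union_singleton_injective,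
    Nat.card_eq_fintype_card]
  ring

theorem setOf_isExtension_isPrimeGraph (hG : G.IsPrimeGraph) :
    {H : SimpleGraph (V ⊕ Unit) | G.IsExtension H ∧ H.IsPrimeGraph} =
      G.extendByVertex '' G.degenerateNeighborSetsᶜ := by
  ext H
  constructor
  · rintro ⟨hH, hp⟩
    refine ⟨_, ?_, hH.eq_extendByVertex.symm⟩
    rw [Set.mem_compl_iff, ← hG.not_isPrimeGraph_extendByVertex_iff, ← hH.eq_extendByVertex]
    exact not_not.mpr hp
  · rintro ⟨S, hS, rfl⟩
    exact ⟨isExtension_extendByVertex G S,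
      not_not.mp (hG.not_isPrimeGraph_extendByVertex_iff.not.mpr hS)⟩

end SimpleGraph

theorem one_vertex_prime_extensions_general {V : Type*} [Fintype V]
    (G : SimpleGraph V) (hG : G.IsPrimeGraph) :
    (∀ H : SimpleGraph (V ⊕ Unit), G.IsExtension H →
      (¬ H.IsPrimeGraph ↔
        {v : V | H.Adj (Sum.inl v) (Sum.inr ())} = ∅ ∨
        {v : V | H.Adj (Sum.inl v) (Sum.inr ())} = Set.univ ∨
        (∃ v : V, {w : V | H.Adj (Sum.inl w) (Sum.inr ())} = G.neighborSet v) ∨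
        (∃ v : V, {w : V | H.Adj (Sum.inl w) (Sum.inr ())} = G.neighborSet v ∪ {v}))) ∧
    {H : SimpleGraph (V ⊕ Unit) | G.IsExtension H ∧ H.IsPrimeGraph}.ncard =
      2 ^ Fintype.card V - 2 * Fintype.card V - 2 := by
  refine ⟨fun H hH => ?_, ?_⟩
  · obtain ⟨S, rfl⟩ : ∃ S, H = G.extendByVertex S := ⟨_, hH.eq_extendByVertex⟩
    simpa [SimpleGraph.mem_degenerateNeighborSets] using
      hG.not_isPrimeGraph_extendByVertex_iff (S := S)
  · rw [SimpleGraph.setOf_isExtension_isPrimeGraph hG,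
      Set.ncard_image_of_injective _ SimpleGraph.extendByVertex_injective, Set.ncard_compl,
      hG.ncard_degenerateNeighborSets, Nat.card_eq_fintype_card, Fintype.card_set]
    omega

/-- characterization of the non-prime one-vertex extensions of a prime graph,
and the count `2^{|V(G)|} - 2|V(G)| - 2` of prime one-vertex extensions. -/
theorem one_vertex_prime_extensions {V : Type*} [Fintype V] [DecidableEq V]
    (G : SimpleGraph V) (hG : G.IsPrimeGraph) :
    (∀ H : SimpleGraph (V ⊕ Unit), G.IsExtension H →
      (¬ H.IsPrimeGraph ↔
        {v : V | H.Adj (Sum.inl v) (Sum.inr ())} = ∅ ∨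
        {v : V | H.Adj (Sum.inl v) (Sum.inr ())} = Set.univ ∨
        (∃ v : V, {w : V | H.Adj (Sum.inl w) (Sum.inr ())} = G.neighborSet v) ∨
        (∃ v : V, {w : V | H.Adj (Sum.inl w) (Sum.inr ())} = G.neighborSet v ∪ {v}))) ∧
    {H : SimpleGraph (V ⊕ Unit) | G.IsExtension H ∧ H.IsPrimeGraph}.ncard =
      2 ^ Fintype.card V - 2 * Fintype.card V - 2 :=
  one_vertex_prime_extensions_general G hG
end

section
/- Let G be a finite graph such that G or its complement has at least one isolated vertex. Then p(G) ≥ ⌈log₂(max(ι(G), ι(Ḡ)) + 1)⌉, where ι denotes the number of isolated vertices. Equivalently: if H is an extension of G with 2^{|V(H)\V(G)|} ≤ ι(G), then H is not prime. -/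
/-! In a prime graph no vertex is isolated and no two vertices have the same neighbourhood, since
`{v}ᶜ` and `{a, b}` would be nontrivial modules. In an extension of `G` by `p` new vertices, an
isolated vertex of `G` is therefore determined by its set of neighbours among the new vertices,
which is nonempty, so `ι(G) < 2 ^ p`; the same holds for `Ḡ`, since complementation preserves
extensions and primality. The bound on `p(G)` also needs `p(G)` to be attained (`sInf ∅ = 0`):
every nonempty `G` extends to a prime graph by attaching a pendant vertex to each vertex, a hub
adjacent to all pendant vertices, and a tip adjacent to the hub. -/

namespace SimpleGraph

variable {V W : Type*}

section Module

variable {G : SimpleGraph V} {M : Set V}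

theorem IsModule.mem_of_adj_of_not_adj_s11 (hM : G.IsModule M) {a b x : V} (ha : a ∈ M)
    (hb : b ∈ M) (hxa : G.Adj x a) (hxb : ¬ G.Adj x b) : x ∈ M := by
  by_contra hx
  rcases hM x hx with hall | hnone
  · exact hxb (hall b hb)
  · exact hnone a ha hxa

theorem isModule_pair_of_forall_adj_iff {a b : V} (h : ∀ x, G.Adj x a ↔ G.Adj x b) :
    G.IsModule {a, b} := by
  intro x _
  by_cases hx : G.Adj x a
  · exact .inl (by rintro m (rfl | rfl) <;> simp_all)
  · exact .inr (by rintro m (rfl | rfl) <;> simp_all)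

theorem IsModule.compl (hM : G.IsModule M) : Gᶜ.IsModule M := by
  intro v hv
  refine (hM v hv).symm.imp (fun hnone m hm => ?_) (fun hall m hm hadj => hadj.2 (hall m hm))
  exact (compl_adj G v m).2 ⟨fun hvm => hv (hvm ▸ hm), hnone m hm⟩

theorem IsModule.image_iso {G' : SimpleGraph W} (f : G ≃g G') (hM : G.IsModule M) :
    G'.IsModule (f '' M) := by
  intro y hy
  have hx : f.symm y ∉ M := fun hx => hy ⟨_, hx, f.apply_symm_apply y⟩
  have hadj (m : V) : G'.Adj y (f m) ↔ G.Adj (f.symm y) m := by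
    rw [← f.map_adj_iff, f.apply_symm_apply]
  refine (hM _ hx).imp ?_ ?_ <;> rintro h _ ⟨m, hm, rfl⟩ <;> simpa [hadj] using h m hm

end Module

section Prime

variable [Fintype V] {G : SimpleGraph V}

theorem isPrimeGraph_of_forall_nontrivial (hcard : 4 ≤ Fintype.card V)
    (h : ∀ M : Set V, G.IsModule M → M.Nontrivial → M = Set.univ) : G.IsPrimeGraph := by
  refine ⟨hcard, fun M hM => ?_⟩
  by_cases hs : M.Subsingleton
  · exact (hs.eq_empty_or_singleton).imp_right .inl
  · exact .inr (.inr (h M hM (Set.not_subsingleton_iff.mp hs)))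

theorem IsPrimeGraph.eq_univ (hG : G.IsPrimeGraph) {M : Set V} (hM : G.IsModule M)
    (hnt : M.Nontrivial) : M = Set.univ := by
  rcases hG.2 M hM with rfl | ⟨v, rfl⟩ | h
  · exact absurd hnt Set.not_nontrivial_empty
  · exact absurd hnt Set.not_nontrivial_singleton
  · exact h

theorem IsPrimeGraph.exists_adj (hG : G.IsPrimeGraph) (v : V) : ∃ w, G.Adj v w := by
  by_contra! hv
  have hM : G.IsModule {v}ᶜ := fun x hx => .inr fun m _ hxm => by
    rw [Set.mem_compl_iff, not_not] at hx
    exact hv m (hx ▸ hxm)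
  have hnt : ({v}ᶜ : Set V).Nontrivial := by
    rw [← Set.one_lt_ncard_iff_nontrivial, Set.ncard_compl, Set.ncard_singleton,
      Nat.card_eq_fintype_card]
    have := hG.1
    omega
  simpa using hG.eq_univ hM hnt

theorem IsPrimeGraph.eq_of_forall_adj_iff (hG : G.IsPrimeGraph) {a b : V}
    (h : ∀ x, G.Adj x a ↔ G.Adj x b) : a = b := by
  by_contra hab
  have huniv := hG.eq_univ (isModule_pair_of_forall_adj_iff h) (Set.nontrivial_pair hab)
  have hcard := congrArg Set.ncard huniv
  rw [Set.ncard_pair hab, Set.ncard_univ, Nat.card_eq_fintype_card] at hcard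
  have := hG.1
  omega

theorem IsPrimeGraph.compl (hG : G.IsPrimeGraph) : Gᶜ.IsPrimeGraph :=
  ⟨hG.1, fun M hM => hG.2 M (by simpa using hM.compl)⟩

theorem IsPrimeGraph.of_iso [Fintype W] {G' : SimpleGraph W} (f : G ≃g G')
    (hG' : G'.IsPrimeGraph) : G.IsPrimeGraph := by
  refine isPrimeGraph_of_forall_nontrivial (f.card_eq ▸ hG'.1) fun M hM hnt => ?_
  have hfM := hG'.eq_univ (hM.image_iso f) (hnt.image f.injective)
  exact Set.eq_univ_of_forall fun x => f.injective.mem_set_image.mp (hfM ▸ Set.mem_univ (f x))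

end Prime

section Extension

variable {G : SimpleGraph V} {H : SimpleGraph (V ⊕ W)}

theorem IsExtension.compl (hext : G.IsExtension H) : Gᶜ.IsExtension Hᶜ := by
  intro u v
  simp [hext u v]

theorem IsExtension.isolatedCount_lt_two_pow [Fintype V] [Fintype W] (hext : G.IsExtension H)
    (hH : H.IsPrimeGraph) : G.isolatedCount < 2 ^ Fintype.card W := by
  set S := {v : V | ∀ w, ¬ G.Adj v w}
  let nbhd : V → Set W := fun v => {w | H.Adj (.inl v) (.inr w)}
  have hadj_inl : ∀ u ∈ S, ∀ x : V, ¬ H.Adj (.inl x) (.inl u) := fun u hu x hxu =>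
    hu x ((hext x u).mp hxu).symm
  have hmaps : ∀ v ∈ S, nbhd v ∈ ({∅}ᶜ : Set (Set W)) := by
    intro v hv hempty
    obtain ⟨x | w, hx⟩ := hH.exists_adj (.inl v)
    · exact hadj_inl v hv x hx.symm
    · exact (Set.eq_empty_iff_forall_notMem.mp hempty) w hx
  have hinj : S.InjOn nbhd := by
    intro u hu v hv huv
    refine Sum.inl_injective (hH.eq_of_forall_adj_iff ?_)
    rintro (x | w)
    · exact iff_of_false (hadj_inl u hu x) (hadj_inl v hv x)
    · simpa [nbhd, H.adj_comm] using Set.ext_iff.mp huv w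
  have hcount := Set.ncard_le_ncard_of_injOn nbhd hmaps hinj
  rw [Set.ncard_compl, Set.ncard_singleton, Nat.card_eq_fintype_card, Fintype.card_set] at hcount
  have := Nat.one_le_two_pow (n := Fintype.card W)
  have hS : G.isolatedCount = S.ncard := rfl
  omega

end Extension

def pendantExtensionRel (G : SimpleGraph V) : V ⊕ (V ⊕ Fin 2) → V ⊕ (V ⊕ Fin 2) → Prop
  | .inl u, .inl v => G.Adj u v
  | .inl u, .inr (.inl v) => u = v
  | .inr (.inl _), .inr (.inr i) => i = 0
  | .inr (.inr i), .inr (.inr j) => i = 0 ∧ j = 1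
  | _, _ => False

/-- `inr (inl v)` is the pendant vertex attached to `v`, `inr (inr 0)` the hub and `inr (inr 1)`
the tip. -/
def pendantExtension (G : SimpleGraph V) : SimpleGraph (V ⊕ (V ⊕ Fin 2)) :=
  fromRel (pendantExtensionRel G)

namespace PendantExtension

def pendant (v : V) : V ⊕ (V ⊕ Fin 2) := .inr (.inl v)

def hub : V ⊕ (V ⊕ Fin 2) := .inr (.inr 0)

def tip : V ⊕ (V ⊕ Fin 2) := .inr (.inr 1)

variable {G : SimpleGraph V}

theorem vertex_cases (x : V ⊕ (V ⊕ Fin 2)) :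
    (∃ v, x = .inl v) ∨ (∃ v, x = pendant v) ∨ x = hub ∨ x = tip := by
  rcases x with v | v | i
  · exact .inl ⟨v, rfl⟩
  · exact .inr (.inl ⟨v, rfl⟩)
  · fin_cases i
    exacts [.inr (.inr (.inl rfl)), .inr (.inr (.inr rfl))]

theorem isExtension : G.IsExtension (pendantExtension G) := by
  intro u v
  simp only [pendantExtension, fromRel_adj, pendantExtensionRel, ne_eq, Sum.inl.injEq]
  rw [G.adj_comm v u, or_self]
  exact and_iff_right_of_imp G.ne_of_adj

theorem adj_pendant {x : V ⊕ (V ⊕ Fin 2)} {v : V} :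
    (pendantExtension G).Adj x (pendant v) ↔ x = .inl v ∨ x = hub := by
  rcases vertex_cases x with ⟨u, rfl⟩ | ⟨u, rfl⟩ | rfl | rfl <;>
    simp [pendantExtension, pendantExtensionRel, pendant, hub, tip]

theorem adj_hub {x : V ⊕ (V ⊕ Fin 2)} :
    (pendantExtension G).Adj x hub ↔ (∃ v, x = pendant v) ∨ x = tip := by
  rcases vertex_cases x with ⟨u, rfl⟩ | ⟨u, rfl⟩ | rfl | rfl <;>
    simp [pendantExtension, pendantExtensionRel, pendant, hub, tip]

theorem adj_tip {x : V ⊕ (V ⊕ Fin 2)} : (pendantExtension G).Adj x tip ↔ x = hub := by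
  rcases vertex_cases x with ⟨u, rfl⟩ | ⟨u, rfl⟩ | rfl | rfl <;>
    simp [pendantExtension, pendantExtensionRel, pendant, hub, tip]

theorem hub_mem {M : Set (V ⊕ (V ⊕ Fin 2))} (hM : (pendantExtension G).IsModule M)
    (hnt : M.Nontrivial) : hub ∈ M := by
  -- otherwise the hub sees all of `M` or none of it; either way `M` is forced to contain a vertex
  -- `v` together with its pendant vertex, which the hub tells apart
  by_contra hhub
  rcases hM hub hhub with hall | hnone
  · obtain ⟨a, ha, hatip⟩ := hnt.exists_ne tip
    obtain ⟨v, rfl⟩ := (adj_hub.mp (hall a ha).symm).resolve_right hatip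
    obtain ⟨c, hc, hcv⟩ := hnt.exists_ne (pendant v)
    have hvc : ¬ (pendantExtension G).Adj (.inl v) c := by
      rcases adj_hub.mp (hall c hc).symm with ⟨u, rfl⟩ | rfl
      · rw [adj_pendant]
        rintro (h | h)
        · exact hcv (Sum.inl_injective h ▸ rfl)
        · exact Sum.inl_ne_inr h
      · simp [adj_tip, hub]
    have hv := hM.mem_of_adj_of_not_adj_s11 ha hc (adj_pendant.mpr (.inl rfl)) hvc
    simpa [adj_hub, pendant, tip] using (hall _ hv).symm
  · have hinl : ∀ m ∈ M, ∃ u, m = .inl u := fun m hm => by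
      rcases vertex_cases m with h | ⟨v, rfl⟩ | rfl | rfl
      · exact h
      · exact absurd (adj_hub.mpr (.inl ⟨v, rfl⟩)).symm (hnone _ hm)
      · exact absurd hm hhub
      · exact absurd (adj_hub.mpr (.inr rfl)).symm (hnone _ hm)
    obtain ⟨a, ha⟩ := hnt.nonempty
    obtain ⟨u, rfl⟩ := hinl a ha
    obtain ⟨b, hb, hbu⟩ := hnt.exists_ne (.inl u)
    obtain ⟨w, rfl⟩ := hinl b hb
    have hu := hM.mem_of_adj_of_not_adj_s11 ha hb (adj_pendant.mpr (.inl rfl)).symm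
      fun h => hbu (by simpa [adj_pendant, hub] using h.symm)
    exact hnone _ hu (adj_hub.mpr (.inl ⟨u, rfl⟩)).symm

theorem eq_univ_of_hub_mem {M : Set (V ⊕ (V ⊕ Fin 2))} (hM : (pendantExtension G).IsModule M)
    (hhub : hub ∈ M) (hnt : M.Nontrivial) : M = Set.univ := by
  obtain ⟨b, hb, hbhub⟩ := hnt.exists_ne hub
  have htip : tip ∈ M := by
    by_cases hbtip : b = tip
    · exact hbtip ▸ hb
    · exact hM.mem_of_adj_of_not_adj_s11 hhub hb (adj_hub.mpr (.inr rfl))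
        fun h => hbhub (adj_tip.mp h.symm)
  have hpendant (v : V) : pendant v ∈ M :=
    hM.mem_of_adj_of_not_adj_s11 hhub htip (adj_hub.mpr (.inl ⟨v, rfl⟩))
      (by simp [adj_tip, pendant, hub])
  have hinl (v : V) : .inl v ∈ M :=
    hM.mem_of_adj_of_not_adj_s11 (hpendant v) hhub (adj_pendant.mpr (.inl rfl))
      (by simp [adj_hub, pendant, tip])
  refine Set.eq_univ_of_forall fun x => ?_
  rcases vertex_cases x with ⟨v, rfl⟩ | ⟨v, rfl⟩ | rfl | rfl
  exacts [hinl v, hpendant v, hhub, htip]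

theorem isPrimeGraph [Fintype V] [Nonempty V] : (pendantExtension G).IsPrimeGraph := by
  refine isPrimeGraph_of_forall_nontrivial ?_ fun M hM hnt =>
    eq_univ_of_hub_mem hM (hub_mem hM hnt) hnt
  have := Fintype.card_pos (α := V)
  simp only [Fintype.card_sum, Fintype.card_fin]
  omega

end PendantExtension

theorem exists_isExtension_isPrimeGraph [Fintype V] [Nonempty V] (G : SimpleGraph V) :
    ∃ p, ∃ H : SimpleGraph (V ⊕ Fin p), G.IsExtension H ∧ H.IsPrimeGraph := by
  let e : V ⊕ Fin (Fintype.card (V ⊕ Fin 2)) ≃ V ⊕ (V ⊕ Fin 2) :=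
    Equiv.sumCongr (Equiv.refl V) (Fintype.equivFin _).symm
  exact ⟨_, (pendantExtension G).comap e, fun u v => PendantExtension.isExtension u v,
    PendantExtension.isPrimeGraph.of_iso (Iso.comap e _)⟩

end SimpleGraph

/-- if `G` or its complement has an isolated vertex, then
`p(G) ≥ ⌈log₂(max(ι(G), ι(Ḡ)) + 1)⌉`, and its equivalent formulation on extensions. -/
theorem primeBound_lower_bound_isolated {V : Type*} [Fintype V] (G : SimpleGraph V)
    (h : 1 ≤ G.isolatedCount ∨ 1 ≤ Gᶜ.isolatedCount) :
    Nat.clog 2 (max G.isolatedCount Gᶜ.isolatedCount + 1) ≤ G.primeBound ∧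
    ∀ (p : ℕ) (H : SimpleGraph (V ⊕ Fin p)), G.IsExtension H →
      2 ^ p ≤ G.isolatedCount → ¬ H.IsPrimeGraph := by
  refine ⟨?_, fun p H hext hp hH =>
    (hext.isolatedCount_lt_two_pow hH).not_ge (by simpa using hp)⟩
  have : Nonempty V := by
    rcases h with h | h <;>
      exact ⟨(Set.nonempty_of_ncard_ne_zero (Nat.one_le_iff_ne_zero.mp h)).some⟩
  obtain ⟨H, hext, hH⟩ : G.primeBound ∈
      {p | ∃ H : SimpleGraph (V ⊕ Fin p), G.IsExtension H ∧ H.IsPrimeGraph} :=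
    Nat.sInf_mem (SimpleGraph.exists_isExtension_isPrimeGraph G)
  have hG := hext.isolatedCount_lt_two_pow hH
  have hGc := hext.compl.isolatedCount_lt_two_pow hH.compl
  rw [Fintype.card_fin] at hG hGc
  rw [Nat.clog_le_iff_le_pow one_lt_two]
  omega
end

section
/- Let G be a finite graph with max(α_M(G), ω_M(G)) ≥ 2. Then the maximal (under inclusion) modules of G of size at least 2 that are cliques or stable sets are pairwise disjoint. -/
/-! Two overlapping modules have a module as their union. If both are cliques, so is the union: a
vertex of `N \ M` is adjacent to a vertex of `M ∩ N`, hence to all of `M`; dually for stable sets.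
A nontrivial clique module `M` and a nontrivial stable module `N` cannot meet in a vertex `x`: some
`u ∈ M \ {x}` is adjacent to `x`, so it lies outside `N` and sees some `v ∈ N \ {x}`; then `v` lies
outside `M` and must see `x` as well. Hence two distinct maximal members of `𝕄(G)` that met would
both equal their union. -/

namespace SimpleGraph

variable {V : Type*} {G : SimpleGraph V} {M N : Set V} {u v w : V}

/-- Membership in the family whose maximal elements form `𝕄(G)`. As `ncard` is `0` on infinite
sets, `2 ≤ X.ncard` also forces `X` to be finite. -/
def IsNontrivialCliqueOrStableModule (G : SimpleGraph V) (X : Set V) : Prop :=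
  G.IsModule X ∧ 2 ≤ X.ncard ∧ (G.IsClique X ∨ G.IsStableSet X)

namespace IsModule

theorem adj_of_adj (hM : G.IsModule M) (hv : v ∉ M) (hu : u ∈ M) (hw : w ∈ M)
    (h : G.Adj v u) : G.Adj v w :=
  (hM v hv).resolve_right (fun hnone => hnone u hu h) w hw

theorem compl_s14 (hM : G.IsModule M) : Gᶜ.IsModule M := by
  intro v hv
  rcases hM v hv with hall | hnone
  · exact .inr fun m hm hc => hc.2 (hall m hm)
  · exact .inl fun m hm => ⟨fun h => hv (h ▸ hm), hnone m hm⟩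

theorem union (hM : G.IsModule M) (hN : G.IsModule N) (hMN : (M ∩ N).Nonempty) :
    G.IsModule (M ∪ N) := by
  obtain ⟨x, hxM, hxN⟩ := hMN
  intro v hv
  rw [Set.mem_union, not_or] at hv
  rcases hM v hv.1 with hall | hnone
  · refine .inl fun m hm => hm.elim (hall m) fun hm => ?_
    exact hN.adj_of_adj hv.2 hxN hm (hall x hxM)
  · refine .inr fun m hm => hm.elim (hnone m) fun hm hadj => ?_
    exact hnone x hxM (hN.adj_of_adj hv.2 hm hxN hadj)

theorem isClique_union (hM : G.IsModule M) (hMc : G.IsClique M) (hNc : G.IsClique N)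
    (hMN : (M ∩ N).Nonempty) : G.IsClique (M ∪ N) := by
  obtain ⟨x, hxM, hxN⟩ := hMN
  have cross : ∀ a ∈ M, ∀ b ∈ N, a ≠ b → G.Adj a b := by
    intro a ha b hb hab
    by_cases hbM : b ∈ M
    · exact hMc ha hbM hab
    · have hbx : b ≠ x := fun h => hbM (h ▸ hxM)
      exact (hM.adj_of_adj hbM hxM ha (hNc hb hxN hbx)).symm
  rintro a (ha | ha) b (hb | hb) hab
  · exact hMc ha hb hab
  · exact cross a ha b hb hab
  · exact (cross b hb a ha hab.symm).symm
  · exact hNc ha hb hab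

theorem disjoint_of_isClique_of_isStableSet (hM : G.IsModule M) (hN : G.IsModule N)
    (hMc : G.IsClique M) (hNs : G.IsStableSet N) (hMnt : M.Nontrivial) (hNnt : N.Nontrivial) :
    Disjoint M N := by
  refine Set.disjoint_left.mpr fun x hxM hxN => ?_
  obtain ⟨u, huM, hux⟩ := hMnt.exists_ne x
  obtain ⟨v, hvN, hvx⟩ := hNnt.exists_ne x
  have hux_adj : G.Adj u x := hMc huM hxM hux
  have hvx_nadj : ¬ G.Adj v x := fun h => (hNs hvN hxN hvx).2 h
  have huN : u ∉ N := fun huN => (hNs huN hxN hux).2 hux_adj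
  have hvM : v ∉ M := fun hvM => hvx_nadj (hMc hvM hxM hvx)
  have huv : G.Adj u v := hN.adj_of_adj huN hxN hvN hux_adj
  exact hvx_nadj (hM.adj_of_adj hvM huM hxM huv.symm)

end IsModule

theorem IsNontrivialCliqueOrStableModule.nontrivial_and_finite
    (hM : G.IsNontrivialCliqueOrStableModule M) : M.Nontrivial ∧ M.Finite :=
  Set.one_lt_ncard_iff_nontrivial_and_finite.mp hM.2.1

theorem IsNontrivialCliqueOrStableModule.union (hM : G.IsNontrivialCliqueOrStableModule M)
    (hN : G.IsNontrivialCliqueOrStableModule N) (hMN : (M ∩ N).Nonempty) :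
    G.IsNontrivialCliqueOrStableModule (M ∪ N) := by
  obtain ⟨hMnt, hMfin⟩ := hM.nontrivial_and_finite
  obtain ⟨hNnt, hNfin⟩ := hN.nontrivial_and_finite
  obtain ⟨hMmod, hMcard, hMc | hMs⟩ := hM <;> obtain ⟨hNmod, -, hNc | hNs⟩ := hN
  all_goals
    refine ⟨hMmod.union hNmod hMN,
      hMcard.trans (Set.ncard_le_ncard Set.subset_union_left (hMfin.union hNfin)), ?_⟩
  · exact .inl (hMmod.isClique_union hMc hNc hMN)
  · exact absurd (hMmod.disjoint_of_isClique_of_isStableSet hNmod hMc hNs hMnt hNnt)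
      (Set.not_disjoint_iff_nonempty_inter.mpr hMN)
  · exact absurd (hNmod.disjoint_of_isClique_of_isStableSet hMmod hNc hMs hNnt hMnt).symm
      (Set.not_disjoint_iff_nonempty_inter.mpr hMN)
  · exact .inr (hMmod.compl_s14.isClique_union hMs hNs hMN)

end SimpleGraph

theorem maximal_clique_or_stable_modules_pairwise_disjoint_general {V : Type*}
    (G : SimpleGraph V) :
    ∀ M N : Set V,
      M ∈ {X : Set V | G.IsModule X ∧ 2 ≤ X.ncard ∧ (G.IsClique X ∨ G.IsStableSet X)} →
      (∀ X ∈ {X : Set V | G.IsModule X ∧ 2 ≤ X.ncard ∧ (G.IsClique X ∨ G.IsStableSet X)},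
        M ⊆ X → M = X) →
      N ∈ {X : Set V | G.IsModule X ∧ 2 ≤ X.ncard ∧ (G.IsClique X ∨ G.IsStableSet X)} →
      (∀ X ∈ {X : Set V | G.IsModule X ∧ 2 ≤ X.ncard ∧ (G.IsClique X ∨ G.IsStableSet X)},
        N ⊆ X → N = X) →
      M ≠ N → Disjoint M N := by
  intro M N hM hMmax hN hNmax hne
  by_contra hMN
  have hU : G.IsNontrivialCliqueOrStableModule (M ∪ N) :=
    .union hM hN (Set.not_disjoint_iff_nonempty_inter.mp hMN)
  exact hne ((hMmax _ hU Set.subset_union_left).trans (hNmax _ hU Set.subset_union_right).symm)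

/-- the maximal modules of size at least 2 that are cliques or stable sets
are pairwise disjoint. -/
theorem maximal_clique_or_stable_modules_pairwise_disjoint {V : Type*} [Fintype V]
    (G : SimpleGraph V)
    (h : 2 ≤ max G.modularStabilityNumber G.modularCliqueNumber) :
    ∀ M N : Set V,
      M ∈ {X : Set V | G.IsModule X ∧ 2 ≤ X.ncard ∧ (G.IsClique X ∨ G.IsStableSet X)} →
      (∀ X ∈ {X : Set V | G.IsModule X ∧ 2 ≤ X.ncard ∧ (G.IsClique X ∨ G.IsStableSet X)},
        M ⊆ X → M = X) →
      N ∈ {X : Set V | G.IsModule X ∧ 2 ≤ X.ncard ∧ (G.IsClique X ∨ G.IsStableSet X)} →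
      (∀ X ∈ {X : Set V | G.IsModule X ∧ 2 ≤ X.ncard ∧ (G.IsClique X ∨ G.IsStableSet X)},
        N ⊆ X → N = X) →
      M ≠ N → Disjoint M N :=
  maximal_clique_or_stable_modules_pairwise_disjoint_general G
end
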